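/- arXiv:2505.19488 — 3 statements merged into one kernel-verified Lean document; each statement's English description precedes it below -/
import Mathlib

section
/- Let φ : ℝ^{d_k} → H be a feature map into an inner-product space, and define sequences by u_t = v_t − Σ_{i=1}^{t-1} ⟨φ(k_i), φ(k_t)⟩ u_i and S_t = Σ_{i=1}^t u_i φ(k_i)ᵀ (with S_0 = 0). Then S_t satisfies the kernelized delta-rule recursion S_t = S_{t-1}(I − φ(k_t)φ(k_t)ᵀ) + v_t φ(k_t)ᵀ. -/
/-!
`S_t` is the linear map `x ↦ Σ_{i<t} ⟨φ(k_i), x⟩ u_i`, so `S_{t+1} = S_t + u_t φ(k_t)ᵀ`, and the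
u-recursion says exactly that `u_t = v_t − S_t φ(k_t)`: the new value is the residual of what the
memory already recalls for the key `k_t`. Substituting and using linearity of `S_t` gives the
delta rule.
-/

open Finset

namespace DeltaRule

variable {𝕜 H E : Type*} [RCLike 𝕜] [NormedAddCommGroup H] [InnerProductSpace 𝕜 H]
  [AddCommGroup E] [Module 𝕜 E]

variable (𝕜) in
/-- The associative memory `Σ_{i<t} w_i a_iᵀ`, storing the value `w i` under the key `a i`. -/
noncomputable def memory (a : ℕ → H) (w : ℕ → E) (t : ℕ) : H →ₗ[𝕜] E :=
  ∑ i ∈ range t, (innerₛₗ 𝕜 (a i)).smulRight (w i)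

theorem memory_apply (a : ℕ → H) (w : ℕ → E) (t : ℕ) (x : H) :
    memory 𝕜 a w t x = ∑ i ∈ range t, inner 𝕜 (a i) x • w i := by
  simp [memory]

theorem memory_succ_apply (a : ℕ → H) (w : ℕ → E) (t : ℕ) (x : H) :
    memory 𝕜 a w (t + 1) x = memory 𝕜 a w t x + inner 𝕜 (a t) x • w t := by
  simp only [memory_apply, sum_range_succ]

theorem memory_succ_apply_of_eq_sub (a : ℕ → H) (v w : ℕ → E) (t : ℕ)
    (hw : w t = v t - memory 𝕜 a w t (a t)) (x : H) :
    memory 𝕜 a w (t + 1) x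
      = memory 𝕜 a w t (x - inner 𝕜 (a t) x • a t) + inner 𝕜 (a t) x • v t := by
  rw [memory_succ_apply, hw, map_sub, map_smul, smul_sub]
  abel

end DeltaRule

open DeltaRule in
/-- Kernelized delta rule: with feature map `φ : ℝ^{d_k} → H` into a real inner-product
space, `u_t = v_t − Σ_{i<t} ⟨φ(k_i), φ(k_t)⟩ u_i` and
`S_t x = Σ_{i<t} ⟨φ(k_i), x⟩ u_i` (so `S_0 = 0`), the memory satisfies the recursion
`S_{t+1} x = S_t ((I − φ(k_t)φ(k_t)ᵀ) x) + ⟨φ(k_t), x⟩ v_t`. -/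
theorem kernelized_delta_rule {dk dv : ℕ} {H : Type*}
    [NormedAddCommGroup H] [InnerProductSpace ℝ H]
    (φ : (Fin dk → ℝ) → H) (k : ℕ → Fin dk → ℝ) (v u : ℕ → Fin dv → ℝ)
    (hu : ∀ t, u t = v t - ∑ i ∈ Finset.range t,
        (inner ℝ (φ (k i)) (φ (k t)) : ℝ) • u i)
    (S : ℕ → H → Fin dv → ℝ)
    (hS : ∀ t x, S t x = ∑ i ∈ Finset.range t, (inner ℝ (φ (k i)) x : ℝ) • u i) :
    ∀ t x, S (t + 1) x
        = S t (x - (inner ℝ (φ (k t)) x : ℝ) • φ (k t))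
          + (inner ℝ (φ (k t)) x : ℝ) • v t := by
  have hS_memory : ∀ t x, S t x = memory ℝ (φ ∘ k) u t x := fun t x => by
    rw [hS, memory_apply]; rfl
  intro t x
  simp only [hS_memory]
  refine memory_succ_apply_of_eq_sub (φ ∘ k) v u t ?_ x
  rw [hu t, memory_apply]
  rfl
end

section
/- Let k₁, …, kₙ be unit vectors in ℝ^d with |kᵢᵀkⱼ| ≤ ε < 1/8 for all i ≠ j, and let f : ℝ → ℝ satisfy f(x̃) = x for every x ∈ {−1, 0, 1, 2} and x̃ with |x̃ − x| ≤ 4ε. Then for all 1 ≤ j < i ≤ n and any vector k_l that is either one of k₁,…,kₙ or a difference k_{l₁} − k_{l₂} with 1 ≤ l₂ < l₁ ≤ n: f((kᵢ − kⱼ)ᵀ k_l) = f(kᵢᵀ k_l) − f(kⱼᵀ k_l). -/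
open Matrix

/-- Auxiliary rounding lemma for state exchange: with near-orthonormal unit keys
(`|kᵢᵀkⱼ| ≤ ε < 1/8` for `i ≠ j`) and `f` rounding any value within `4ε` of an
element of `{−1, 0, 1, 2}` to that element, for all `j < i` and any `k_l` that is one
of the keys or a difference `k_{l₁} − k_{l₂}` with `l₂ < l₁`:
`f((kᵢ − kⱼ)ᵀ k_l) = f(kᵢᵀ k_l) − f(kⱼᵀ k_l)`. -/
theorem state_exchange_rounding_lemma {d n : ℕ} (ε : ℝ) (hε : ε < 1 / 8)
    (k : Fin n → Fin d → ℝ)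
    (hunit : ∀ i, k i ⬝ᵥ k i = 1)
    (hcoh : ∀ i j, i ≠ j → |k i ⬝ᵥ k j| ≤ ε)
    (f : ℝ → ℝ)
    (hf : ∀ x : ℝ, x ∈ ({-1, 0, 1, 2} : Set ℝ) → ∀ y : ℝ, |y - x| ≤ 4 * ε → f y = x)
    (i j : Fin n) (hji : j < i)
    (kl : Fin d → ℝ)
    (hkl : (∃ p, kl = k p) ∨ ∃ p q : Fin n, q < p ∧ kl = k p - k q) :
    f ((k i - k j) ⬝ᵥ kl) = f (k i ⬝ᵥ kl) - f (k j ⬝ᵥ kl) := by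
  have hji' : j ≠ i := ne_of_lt hji
  have hij : i ≠ j := hji'.symm
  have hε0 : 0 ≤ ε := le_trans (abs_nonneg _) (hcoh j i hji')
  have hδ : ∀ a b : Fin n, |k a ⬝ᵥ k b - (if a = b then (1:ℝ) else 0)| ≤ ε := by
    intro a b
    by_cases h : a = b
    · subst h; simp [hunit a, hε0]
    · simpa [h] using hcoh a b h
  rcases hkl with ⟨p, rfl⟩ | ⟨p, q, hqp, rfl⟩
  · have hia := abs_le.mp (hδ i p)
    have hjb := abs_le.mp (hδ j p)
    have mab : ∀ a b : Fin n, ((if a = b then (1:ℝ) else 0)) ∈ ({-1, 0, 1, 2} : Set ℝ) := by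
      intro a b; split_ifs <;> norm_num
    have h1 : f (k i ⬝ᵥ k p) = (if i = p then (1:ℝ) else 0) :=
      hf _ (mab i p) _ (by rw [abs_le]; constructor <;> linarith [hia.1, hia.2])
    have h2 : f (k j ⬝ᵥ k p) = (if j = p then (1:ℝ) else 0) :=
      hf _ (mab j p) _ (by rw [abs_le]; constructor <;> linarith [hjb.1, hjb.2])
    have h3 : f ((k i - k j) ⬝ᵥ k p) =
        (if i = p then (1:ℝ) else 0) - (if j = p then (1:ℝ) else 0) := by
      apply hf
      · split_ifs <;> norm_num
      · rw [sub_dotProduct, abs_le]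
        constructor <;> linarith [hia.1, hia.2, hjb.1, hjb.2]
    rw [h1, h2, h3]
  · have hpq : p ≠ q := (ne_of_lt hqp).symm
    have hqp' : q ≠ p := ne_of_lt hqp
    have hip := abs_le.mp (hδ i p)
    have hiq := abs_le.mp (hδ i q)
    have hjp := abs_le.mp (hδ j p)
    have hjq := abs_le.mp (hδ j q)
    have h1 : f (k i ⬝ᵥ (k p - k q)) =
        (if i = p then (1:ℝ) else 0) - (if i = q then (1:ℝ) else 0) := by
      apply hf
      · rcases eq_or_ne i p with h | h <;> rcases eq_or_ne i q with h' | h' <;>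
          first
            | exact absurd (h.symm.trans h') hpq
            | norm_num [h, h', hpq, hqp']
      · rw [dotProduct_sub, abs_le]
        constructor <;> linarith [hip.1, hip.2, hiq.1, hiq.2]
    have h2 : f (k j ⬝ᵥ (k p - k q)) =
        (if j = p then (1:ℝ) else 0) - (if j = q then (1:ℝ) else 0) := by
      apply hf
      · rcases eq_or_ne j p with h | h <;> rcases eq_or_ne j q with h' | h' <;>
          first
            | exact absurd (h.symm.trans h') hpq
            | norm_num [h, h', hpq, hqp']
      · rw [dotProduct_sub, abs_le]
        constructor <;> linarith [hjp.1, hjp.2, hjq.1, hjq.2]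
    have h3 : f ((k i - k j) ⬝ᵥ (k p - k q)) =
        ((if i = p then (1:ℝ) else 0) - (if i = q then (1:ℝ) else 0)) -
        ((if j = p then (1:ℝ) else 0) - (if j = q then (1:ℝ) else 0)) := by
      apply hf
      · rcases eq_or_ne i p with h1 | h1 <;> rcases eq_or_ne i q with h2 | h2 <;>
          rcases eq_or_ne j p with h3 | h3 <;> rcases eq_or_ne j q with h4 | h4 <;>
          first
            | exact absurd (h1.symm.trans h2) hpq
            | exact absurd (h3.symm.trans h4) hpq
            | exact absurd (h1.trans h3.symm) hij
            | exact absurd (h2.trans h4.symm) hij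
            | (exfalso; rw [h2, h3] at hji; exact lt_asymm hqp hji)
            | norm_num [h1, h2, h3, h4, hpq, hqp']
      · rw [sub_dotProduct, dotProduct_sub, dotProduct_sub, abs_le]
        constructor <;>
          linarith [hip.1, hip.2, hiq.1, hiq.2, hjp.1, hjp.2, hjq.1, hjq.2]
    rw [h1, h2, h3]
end

section
/- With keys k₁,…,kₙ as in Assumption 1 (unit vectors, pairwise |kᵢᵀkⱼ| ≤ ε < 1/8) and f as in Assumption 2, initialize u_i = v_i for i ≤ n (which holds since f(kᵢᵀkᵢ) with history gives u_i = v_i when all prior inner products round to 0), and at each subsequent step t define k_t = k_{t₁} − k_{t₂} (a swap of positions t₁ > t₂), v_t = 0, u_t = v_t − Σ_{i<t} f(kᵢᵀk_t) u_i. Then at every time t, querying with q = k_p for any p ∈ {1,…,n} returns o = Σ_{i≤t} f(k_pᵀkᵢ) u_i equal to the value currently assigned to position p under the composition of all swaps performed so far. -/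
open Matrix

/-- State Exchange theorem for DeltaFormer. Keys `k₁,…,kₙ` are unit vectors with
pairwise coherence `≤ ε < 1/8`, and `f` rounds any value within `4ε` of an element of
`{−1, 0, 1, 2}` to that element. The first `n` steps write `(kᵢ, vᵢ)`; step `n + s`
performs the swap `(t₁, t₂) = swaps s` (with `t₂ < t₁`) by writing
`K_t = k_{t₁} − k_{t₂}`, `V_t = 0`, with `u_t = V_t − Σ_{i<t} f(Kᵢᵀ K_t) u_i`.
Then after any number `s` of swaps, querying with `q = k_p` returns
`Σ_{i < n+s} f(k_pᵀ Kᵢ) u_i`, the value currently assigned to position `p` under the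
composition of the swaps performed so far. -/
theorem deltaformer_state_exchange {d dv n : ℕ} (ε : ℝ) (hε0 : 0 ≤ ε) (hε : ε < 1 / 8)
    (k : Fin n → Fin d → ℝ)
    (hunit : ∀ i, k i ⬝ᵥ k i = 1)
    (hcoh : ∀ i j, i ≠ j → |k i ⬝ᵥ k j| ≤ ε)
    (f : ℝ → ℝ)
    (hf : ∀ x : ℝ, x ∈ ({-1, 0, 1, 2} : Set ℝ) → ∀ y : ℝ, |y - x| ≤ 4 * ε → f y = x)
    (v : Fin n → Fin dv → ℝ)
    (swaps : ℕ → Fin n × Fin n) (hswaps : ∀ s, (swaps s).2 < (swaps s).1)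
    (K : ℕ → Fin d → ℝ) (V u : ℕ → Fin dv → ℝ)
    (hK1 : ∀ t (h : t < n), K t = k ⟨t, h⟩)
    (hK2 : ∀ t, n ≤ t → K t = k (swaps (t - n)).1 - k (swaps (t - n)).2)
    (hV1 : ∀ t (h : t < n), V t = v ⟨t, h⟩)
    (hV2 : ∀ t, n ≤ t → V t = 0)
    (hu : ∀ t, u t = V t - ∑ i ∈ Finset.range t, f (K i ⬝ᵥ K t) • u i)
    (val : ℕ → Fin n → Fin dv → ℝ)
    (hval0 : val 0 = v)
    (hvalS : ∀ s, val (s + 1) = val s ∘ Equiv.swap (swaps s).1 (swaps s).2) :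
    ∀ s (p : Fin n),
      (∑ i ∈ Finset.range (n + s), f (k p ⬝ᵥ K i) • u i) = val s p := by
  -- basic facts about the rounding function applied to inner products of keys
  -- basic facts about the rounding function applied to inner products of keys
  have hdot : ∀ x y : Fin n, |k x ⬝ᵥ k y - (if x = y then (1:ℝ) else 0)| ≤ ε := by
    intro x y
    split_ifs with h
    · subst h; rw [hunit]; simpa using hε0
    · simpa using hcoh x y h
  have hf1 : ∀ x y : Fin n, f (k x ⬝ᵥ k y) = if x = y then (1:ℝ) else 0 := by
    intro x y
    have h := abs_le.mp (hdot x y)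
    split_ifs with hxy
    · rw [if_pos hxy] at h
      refine hf 1 (by simp) _ ?_
      rw [abs_le]; constructor <;> linarith [h.1, h.2]
    · rw [if_neg hxy] at h
      refine hf 0 (by simp) _ ?_
      rw [abs_le]; constructor <;> linarith [h.1, h.2]
  -- the first n writes just store the values
  have hu_init : ∀ i (h : i < n), u i = v ⟨i, h⟩ := by
    intro i h
    rw [hu, hV1 i h]
    have hz : (∑ j ∈ Finset.range i, f (K j ⬝ᵥ K i) • u j) = 0 := by
      refine Finset.sum_eq_zero fun j hj => ?_
      have hji : j < i := Finset.mem_range.mp hj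
      have hjn : j < n := hji.trans h
      rw [hK1 j hjn, hK1 i h, hf1]
      have hne : (⟨j, hjn⟩ : Fin n) ≠ ⟨i, h⟩ := by
        simp only [ne_eq, Fin.mk.injEq]; omega
      rw [if_neg hne, zero_smul]
    rw [hz, sub_zero]
  -- querying a swap step with an original key
  have lemA : ∀ s (p : Fin n), f (k p ⬝ᵥ K (n + s)) =
      (if p = (swaps s).1 then (1:ℝ) else 0) - (if p = (swaps s).2 then (1:ℝ) else 0) := by
    intro s p
    rw [hK2 (n + s) (Nat.le_add_right n s), Nat.add_sub_cancel_left, dotProduct_sub]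
    have hab : (swaps s).1 ≠ (swaps s).2 := (hswaps s).ne'
    have h1 := abs_le.mp (hdot p (swaps s).1)
    have h2 := abs_le.mp (hdot p (swaps s).2)
    by_cases hpa : p = (swaps s).1
    · have hpb : p ≠ (swaps s).2 := hpa ▸ hab
      rw [if_pos hpa] at h1 ⊢; rw [if_neg hpb] at h2 ⊢
      rw [sub_zero]
      refine hf 1 (by simp) _ ?_
      rw [abs_le]; constructor <;> linarith [h1.1, h1.2, h2.1, h2.2]
    · by_cases hpb : p = (swaps s).2
      · rw [if_neg hpa] at h1 ⊢; rw [if_pos hpb] at h2 ⊢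
        rw [zero_sub]
        refine hf (-1) (by simp) _ ?_
        rw [abs_le]; constructor <;> linarith [h1.1, h1.2, h2.1, h2.2]
      · rw [if_neg hpa] at h1 ⊢; rw [if_neg hpb] at h2 ⊢
        rw [sub_zero]
        refine hf 0 (by simp) _ ?_
        rw [abs_le]; constructor <;> linarith [h1.1, h1.2, h2.1, h2.2]
  -- the key lemma: f distributes over the difference of keys
  have lemB : ∀ s i, i < n + s →
      f (K i ⬝ᵥ K (n + s)) =
        f (k (swaps s).1 ⬝ᵥ K i) - f (k (swaps s).2 ⬝ᵥ K i) := by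
    intro s i hi
    rcases lt_or_ge i n with hin | hin
    · rw [hK1 i hin, lemA s ⟨i, hin⟩, hf1, hf1]
      simp only [eq_comm]
    · -- i = n + s' with s' < s
      obtain ⟨s', rfl⟩ : ∃ s', i = n + s' := ⟨i - n, by omega⟩
      rw [lemA s' (swaps s).1, lemA s' (swaps s).2]
      rw [hK2 (n + s') (Nat.le_add_right n s'), Nat.add_sub_cancel_left,
        hK2 (n + s) (Nat.le_add_right n s), Nat.add_sub_cancel_left,
        sub_dotProduct, dotProduct_sub, dotProduct_sub]
      set a' := (swaps s').1 with ha'def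
      set b' := (swaps s').2 with hb'def
      set a := (swaps s).1 with hadef
      set b := (swaps s).2 with hbdef
      have hab : b < a := hswaps s
      have ha'b' : b' < a' := hswaps s'
      have h1 := abs_le.mp (hdot a' a)
      have h2 := abs_le.mp (hdot a' b)
      have h3 := abs_le.mp (hdot b' a)
      have h4 := abs_le.mp (hdot b' b)
      -- the target value
      set δ : ℝ := ((if a' = a then (1:ℝ) else 0) - (if a' = b then (1:ℝ) else 0)) -
        ((if b' = a then (1:ℝ) else 0) - (if b' = b then (1:ℝ) else 0)) with hδdef
      have hbound : |(k a' ⬝ᵥ k a - k a' ⬝ᵥ k b) - (k b' ⬝ᵥ k a - k b' ⬝ᵥ k b) - δ| ≤ 4 * ε := by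
        rw [hδdef, abs_le]
        constructor <;> linarith [h1.1, h1.2, h2.1, h2.2, h3.1, h3.2, h4.1, h4.2]
      have hmem : δ ∈ ({-1, 0, 1, 2} : Set ℝ) := by
        have hne_ab : a ≠ b := hab.ne'
        rw [hδdef]
        by_cases e1 : a' = a
        · have e2 : ¬ a' = b := fun h => hne_ab (e1.symm.trans h)
          have e3 : ¬ b' = a := fun h => by
            rw [e1, h] at ha'b'; exact lt_irrefl a ha'b'
          rw [if_pos e1, if_neg e2, if_neg e3]
          by_cases e4 : b' = b
          · rw [if_pos e4]
            norm_num [Set.mem_insert_iff, Set.mem_singleton_iff]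
          · rw [if_neg e4]
            norm_num [Set.mem_insert_iff, Set.mem_singleton_iff]
        · by_cases e2 : a' = b
          · have e3 : ¬ b' = a := fun h => by
              rw [e2, h] at ha'b'; exact lt_asymm hab ha'b'
            have e4 : ¬ b' = b := fun h => by
              rw [e2, h] at ha'b'; exact lt_irrefl b ha'b'
            rw [if_neg e1, if_pos e2, if_neg e3, if_neg e4]
            norm_num [Set.mem_insert_iff, Set.mem_singleton_iff]
          · by_cases e3 : b' = a
            · have e4 : ¬ b' = b := fun h => hne_ab (e3.symm.trans h)
              rw [if_neg e1, if_neg e2, if_pos e3, if_neg e4]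
              norm_num [Set.mem_insert_iff, Set.mem_singleton_iff]
            · by_cases e4 : b' = b
              · rw [if_neg e1, if_neg e2, if_neg e3, if_pos e4]
                norm_num [Set.mem_insert_iff, Set.mem_singleton_iff]
              · rw [if_neg e1, if_neg e2, if_neg e3, if_neg e4]
                norm_num [Set.mem_insert_iff, Set.mem_singleton_iff]
      have := hf δ hmem _ hbound
      rw [this, hδdef]
      -- reorient the equalities in the if-conditions and regroup
      simp only [eq_comm]
      ring
  -- main induction on the number of swaps
  intro s
  induction s with
  | zero =>
    intro p
    rw [Nat.add_zero, hval0]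
    rw [Finset.sum_eq_single_of_mem p.val (Finset.mem_range.mpr p.isLt)]
    · rw [hK1 p.val p.isLt, hf1, if_pos (by simp [Fin.ext_iff]), one_smul,
        hu_init p.val p.isLt, Fin.eta]
    · intro j hj hjp
      have hjn : j < n := Finset.mem_range.mp hj
      rw [hK1 j hjn, hf1, if_neg (by simp [Fin.ext_iff]; omega), zero_smul]
  | succ s IH =>
    intro p
    have hns : n + (s + 1) = (n + s) + 1 := rfl
    rw [hns, Finset.sum_range_succ]
    have huns : u (n + s) = val s (swaps s).2 - val s (swaps s).1 := by
      rw [hu, hV2 (n + s) (Nat.le_add_right n s), zero_sub]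
      have hsum : (∑ i ∈ Finset.range (n + s), f (K i ⬝ᵥ K (n + s)) • u i) =
          (∑ i ∈ Finset.range (n + s), f (k (swaps s).1 ⬝ᵥ K i) • u i) -
          (∑ i ∈ Finset.range (n + s), f (k (swaps s).2 ⬝ᵥ K i) • u i) := by
        rw [← Finset.sum_sub_distrib]
        refine Finset.sum_congr rfl fun i hi => ?_
        rw [lemB s i (Finset.mem_range.mp hi), sub_smul]
      rw [hsum, IH (swaps s).1, IH (swaps s).2]
      abel
    rw [IH p, lemA s p, huns, hvalS s]
    have hab : (swaps s).1 ≠ (swaps s).2 := (hswaps s).ne'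
    by_cases hpa : p = (swaps s).1
    · rw [if_pos hpa, if_neg (hpa ▸ hab), hpa]
      simp only [Function.comp_apply, Equiv.swap_apply_left]
      rw [sub_zero, one_smul]
      abel
    · by_cases hpb : p = (swaps s).2
      · rw [if_neg hpa, if_pos hpb, hpb]
        simp only [Function.comp_apply, Equiv.swap_apply_right]
        rw [zero_sub, neg_smul, one_smul]
        abel
      · rw [if_neg hpa, if_neg hpb]
        simp only [Function.comp_apply, Equiv.swap_apply_of_ne_of_ne hpa hpb]
        rw [sub_self, zero_smul, add_zero]
end
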